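/- arXiv:2511.11932 — 3 statements merged into one kernel-verified Lean document; each statement's English description precedes it below -/
import Mathlib

section
/- Let p ≥ 2 be a real number and let β be a real number with 0 ≤ β < 2^{p−1} − 1. Then for every s ∈ (0,1) one has s^p + (1 − s)^p + 2β s^{p/2} (1 − s)^{p/2} < 1. -/
open Real Set

/-! Since `2β < 2^p - 2`, it suffices that `a^p + b^p + (2^p - 2)(ab)^{p/2} ≤ (a + b)^p`
for `a, b > 0`. Both sides are homogeneous of degree `p`, so we may write `a = m e^y`,
`b = m e^{-y}`; the claim becomes `2^p - 2 ≤ (e^y + e^{-y})^p - e^{py} - e^{-py}`, with equality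
at `y = 0`. The right side is even, and nondecreasing for `y ≥ 0` since its derivative is `p`
times `(a - b)(a + b)^{p-1} - (a^p - b^p)` with `a = e^y ≥ b = e^{-y}`, which is nonnegative
because the secant slopes of the convex function `x^{p-1}` increase. -/

theorem rpow_sub_one_mul_self {x p : ℝ} (hx : 0 ≤ x) (hp : p ≠ 0) :
    x ^ (p - 1) * x = x ^ p := by
  rw [← rpow_add_one' hx (by rwa [sub_add_cancel]), sub_add_cancel]

theorem rpow_sub_rpow_le_sub_mul_add_rpow {p a b : ℝ} (hp : 2 ≤ p) (hb : 0 ≤ b)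
    (hba : b ≤ a) :
    a ^ p - b ^ p ≤ (a - b) * (a + b) ^ (p - 1) := by
  have hp0 : p ≠ 0 := by linarith
  rcases hb.eq_or_lt with rfl | hb
  · rw [zero_rpow hp0, sub_zero, sub_zero, add_zero, ← rpow_sub_one_mul_self hba hp0, mul_comm]
  rcases hba.eq_or_lt with rfl | hba
  · simp
  -- convexity of `x ^ (p - 1)` at the three points `b < a < a + b`
  have hconv := (convexOn_rpow (p := p - 1) (by linarith)).secant_mono_aux1
    hb.le (by linarith : 0 ≤ a + b) hba (by linarith)
  rw [← rpow_sub_one_mul_self hb.le hp0, ← rpow_sub_one_mul_self (hb.trans hba).le hp0]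
  linarith

theorem two_rpow_sub_two_le_exp_add_exp_neg_rpow {p : ℝ} (hp : 2 ≤ p) (y : ℝ) :
    2 ^ p - 2 ≤ (exp y + exp (-y)) ^ p - exp y ^ p - exp (-y) ^ p := by
  wlog hy : 0 ≤ y generalizing y
  · have := this (-y) (by linarith)
    rw [neg_neg, add_comm (exp (-y))] at this
    linarith
  set F : ℝ → ℝ := fun y ↦ (exp y + exp (-y)) ^ p - exp y ^ p - exp (-y) ^ p
  have hF : ∀ y, HasDerivAt F
      (p * ((exp y - exp (-y)) * (exp y + exp (-y)) ^ (p - 1) - (exp y ^ p - exp (-y) ^ p))) y := by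
    intro y
    have h1p : 1 ≤ p := by linarith
    have hp0 : p ≠ 0 := by linarith
    have hpow := rpow_sub_one_mul_self (exp_pos y).le hp0
    have hpow_neg := rpow_sub_one_mul_self (exp_pos (-y)).le hp0
    have hexp_neg : HasDerivAt (fun x ↦ exp (-x)) (-exp (-y)) y := by
      simpa using (hasDerivAt_neg y).exp
    have hsum := ((hasDerivAt_exp y).fun_add hexp_neg).rpow_const (Or.inr h1p)
    refine ((hsum.sub ((hasDerivAt_exp y).rpow_const (Or.inr h1p))).sub
      (hexp_neg.rpow_const (Or.inr h1p))).congr_deriv ?_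
    linear_combination p * hpow_neg - p * hpow
  have hmono : MonotoneOn F (Ici 0) := by
    refine monotoneOn_of_hasDerivWithinAt_nonneg (convex_Ici 0)
      (fun y _ ↦ (hF y).continuousAt.continuousWithinAt) (fun y _ ↦ (hF y).hasDerivWithinAt) ?_
    intro y hy
    rw [interior_Ici, mem_Ioi] at hy
    exact mul_nonneg (by linarith) (sub_nonneg.2 (rpow_sub_rpow_le_sub_mul_add_rpow hp
      (exp_pos _).le (exp_le_exp.2 (by linarith))))
  have hF0 : F 0 = 2 ^ p - 2 := by norm_num [F]; ring
  exact hF0 ▸ hmono self_mem_Ici hy hy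

theorem rpow_add_rpow_add_mul_le_add_rpow {p a b : ℝ} (hp : 2 ≤ p) (ha : 0 < a) (hb : 0 < b) :
    a ^ p + b ^ p + (2 ^ p - 2) * (a ^ (p / 2) * b ^ (p / 2)) ≤ (a + b) ^ p := by
  set m := exp ((log a + log b) / 2)
  set y := (log a - log b) / 2
  have ha' : a = m * exp y := by
    rw [← exp_add, show (log a + log b) / 2 + y = log a by ring, exp_log ha]
  have hb' : b = m * exp (-y) := by
    rw [← exp_add, show (log a + log b) / 2 + -y = log b by ring, exp_log hb]
  have hm := (exp_pos ((log a + log b) / 2)).le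
  have hgeom : a ^ (p / 2) * b ^ (p / 2) = m ^ p := by
    rw [ha', hb', mul_rpow hm (exp_pos _).le, mul_rpow hm (exp_pos _).le,
      mul_mul_mul_comm, ← rpow_add (exp_pos _), add_halves,
      ← mul_rpow (exp_pos _).le (exp_pos _).le, ← exp_add, add_neg_cancel, exp_zero, one_rpow,
      mul_one]
  have key := mul_le_mul_of_nonneg_left (two_rpow_sub_two_le_exp_add_exp_neg_rpow hp y)
    (rpow_nonneg hm p)
  rw [hgeom, ha', hb', ← mul_add, mul_rpow hm (exp_pos _).le, mul_rpow hm (exp_pos _).le,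
    mul_rpow hm (by positivity)]
  linarith

theorem h_beta_lt_one_general (p : ℝ) (hp : 2 ≤ p) (beta : ℝ)
    (hbeta : beta < 2 ^ (p - 1) - 1) (s : ℝ) (hs : s ∈ Set.Ioo (0 : ℝ) 1) :
    s ^ p + (1 - s) ^ p + 2 * beta * s ^ (p / 2) * (1 - s) ^ (p / 2) < 1 := by
  obtain ⟨hs0, hs1⟩ := hs
  have hcross : 0 < s ^ (p / 2) * (1 - s) ^ (p / 2) := by
    have : 0 < 1 - s := by linarith
    positivity
  have hbeta2 : 2 * beta < 2 ^ p - 2 := by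
    rw [rpow_sub_one two_ne_zero] at hbeta
    linarith
  have key := rpow_add_rpow_add_mul_le_add_rpow hp hs0 (sub_pos.2 hs1)
  rw [add_sub_cancel, one_rpow] at key
  linarith [mul_lt_mul_of_pos_right hbeta2 hcross]

/-- For `p ≥ 2` and `0 ≤ β < 2^{p−1} − 1`, for every `s ∈ (0,1)` one has
`s^p + (1 − s)^p + 2β s^{p/2}(1 − s)^{p/2} < 1`. -/
theorem h_beta_lt_one (p : ℝ) (hp : 2 ≤ p) (beta : ℝ) (hbeta0 : 0 ≤ beta)
    (hbeta : beta < 2 ^ (p - 1) - 1) (s : ℝ) (hs : s ∈ Set.Ioo (0 : ℝ) 1) :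
    s ^ p + (1 - s) ^ p + 2 * beta * s ^ (p / 2) * (1 - s) ^ (p / 2) < 1 :=
  h_beta_lt_one_general p hp beta hbeta s hs
end

section
/- Let p ≥ 2 be a real number, and let A, B, C, D be real numbers with A ≥ 0, B > 0, C ∈ ℝ, D > 0. Define f : (0,∞) → ℝ by f(t) = (A/2) t⁴ + (B/4) t⁴ log(1/t) + (C/4) t⁴ − (D/(2p)) t^{4p−2}. Then there exists a unique t₀ > 0 such that f′(t₀) = 0, and this t₀ satisfies f(t₀) = sup_{t > 0} f(t) with f(t₀) > 0. -/
open Real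

set_option maxHeartbeats 1000000 in
/-- For `p ≥ 2`, `A ≥ 0`, `B > 0`, `C ∈ ℝ`, `D > 0`, the fiber map
`f(t) = (A/2)t⁴ + (B/4)t⁴ log(1/t) + (C/4)t⁴ − (D/(2p)) t^{4p−2}` has a unique
critical point `t₀ > 0`, at which it attains its (positive) global maximum on `(0,∞)`. -/
theorem fiber_unique_maximizer (p : ℝ) (hp : 2 ≤ p)
    (A B C D : ℝ) (hA : 0 ≤ A) (hB : 0 < B) (hD : 0 < D)
    (f : ℝ → ℝ)
    (hf : ∀ t : ℝ, f t = A / 2 * t ^ 4 + B / 4 * t ^ 4 * Real.log (1 / t)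
      + C / 4 * t ^ 4 - D / (2 * p) * t ^ (4 * p - 2)) :
    ∃ t₀ : ℝ, 0 < t₀ ∧ deriv f t₀ = 0 ∧
      (∀ t : ℝ, 0 < t → deriv f t = 0 → t = t₀) ∧
      (∀ t : ℝ, 0 < t → f t ≤ f t₀) ∧ 0 < f t₀ := by
  have hp0 : (0:ℝ) < p := by linarith
  set α : ℝ := 4 * p - 6 with hα
  have hα2 : (2:ℝ) ≤ α := by simp only [hα]; linarith
  have hα0 : (0:ℝ) < α := by linarith
  set E : ℝ := D * (4 * p - 2) / (2 * p) with hE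
  have hE0 : (0:ℝ) < E := by
    apply div_pos
    · nlinarith
    · linarith
  set K : ℝ := 2 * A + C - B / 4 with hK
  set g : ℝ → ℝ := fun t => K - B * Real.log t - E * t ^ α with hg
  -- rewrite f
  have hf' : f = fun t => A / 2 * t ^ 4 - B / 4 * (t ^ 4 * Real.log t)
      + C / 4 * t ^ 4 - D / (2 * p) * t ^ (4 * p - 2) := by
    funext t
    rw [hf t, one_div, Real.log_inv]
    ring
  have h3 : ∀ t : ℝ, 0 < t → t ^ (4 * p - 2 - 1) = t ^ 3 * t ^ α := by
    intro t ht
    rw [show 4 * p - 2 - 1 = (3:ℝ) + α by simp only [hα]; ring,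
      Real.rpow_add ht, show (3:ℝ) = ((3:ℕ):ℝ) by norm_num, Real.rpow_natCast]
  -- derivative of f
  have hderiv : ∀ t : ℝ, 0 < t → HasDerivAt f (t ^ 3 * g t) t := by
    intro t ht
    have hpow : HasDerivAt (fun x : ℝ => x ^ 4) (4 * t ^ 3) t := by
      simpa using hasDerivAt_pow 4 t
    have hmul : HasDerivAt (fun x : ℝ => x ^ 4 * Real.log x)
        (4 * t ^ 3 * Real.log t + t ^ 4 * t⁻¹) t :=
      hpow.mul (Real.hasDerivAt_log ht.ne')
    have hrpow : HasDerivAt (fun x : ℝ => x ^ (4 * p - 2))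
        ((4 * p - 2) * t ^ (4 * p - 2 - 1)) t :=
      Real.hasDerivAt_rpow_const (Or.inl ht.ne')
    have hF : HasDerivAt f (A / 2 * (4 * t ^ 3)
        - B / 4 * (4 * t ^ 3 * Real.log t + t ^ 4 * t⁻¹)
        + C / 4 * (4 * t ^ 3) - D / (2 * p) * ((4 * p - 2) * t ^ (4 * p - 2 - 1))) t := by
      rw [hf']
      exact (((hpow.const_mul (A/2)).sub (hmul.const_mul (B/4))).add
        (hpow.const_mul (C/4))).sub (hrpow.const_mul (D/(2*p)))
    convert hF using 1
    rw [h3 t ht]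
    simp only [hg, hE, hK]
    field_simp
    ring
  -- g is strictly decreasing on (0, ∞)
  have hanti : StrictAntiOn g (Set.Ioi (0:ℝ)) := by
    intro x hx y hy hxy
    simp only [hg]
    have hlog : Real.log x < Real.log y := Real.log_lt_log hx hxy
    have hrp : x ^ α < y ^ α := Real.rpow_lt_rpow (le_of_lt hx) hxy hα0
    nlinarith
  -- endpoints for IVT
  set s₁ : ℝ := max 0 ((E - K + 1) / B) with hs₁
  set a : ℝ := Real.exp (-s₁) with ha
  have ha0 : 0 < a := Real.exp_pos _
  have hs₁0 : 0 ≤ s₁ := le_max_left _ _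
  have ha1 : a ≤ 1 := Real.exp_le_one_iff.mpr (by linarith)
  have hga : 0 < g a := by
    have hlog : Real.log a = -s₁ := Real.log_exp _
    have haα : a ^ α ≤ 1 := Real.rpow_le_one (le_of_lt ha0) ha1 (le_of_lt hα0)
    have hBs : E - K + 1 ≤ B * s₁ := by
      have h1 : (E - K + 1) / B ≤ s₁ := le_max_right _ _
      calc E - K + 1 = (E - K + 1) / B * B := by field_simp
        _ ≤ s₁ * B := mul_le_mul_of_nonneg_right h1 (le_of_lt hB)
        _ = B * s₁ := mul_comm _ _
    simp only [hg, hlog]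
    nlinarith
  set b : ℝ := max 1 ((|K| + 1) / E) with hb
  have hb1 : (1:ℝ) ≤ b := le_max_left _ _
  have hb0 : (0:ℝ) < b := lt_of_lt_of_le one_pos hb1
  have hgb : g b < 0 := by
    have hlog : 0 ≤ Real.log b := Real.log_nonneg hb1
    have hbα : b ≤ b ^ α := by
      calc b = b ^ (1:ℝ) := (Real.rpow_one b).symm
        _ ≤ b ^ α := Real.rpow_le_rpow_of_exponent_le hb1 (by linarith)
    have hEb : |K| + 1 ≤ E * b := by
      have h1 : (|K| + 1) / E ≤ b := le_max_right _ _
      calc |K| + 1 = (|K| + 1) / E * E := by field_simp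
        _ ≤ b * E := mul_le_mul_of_nonneg_right h1 (le_of_lt hE0)
        _ = E * b := mul_comm _ _
    have hKabs : K ≤ |K| := le_abs_self K
    simp only [hg]
    nlinarith
  have hab : a ≤ b := le_trans ha1 hb1
  -- continuity of g on [a,b]
  have hcont : ContinuousOn g (Set.Icc a b) := by
    intro x hx
    have hx0 : 0 < x := lt_of_lt_of_le ha0 hx.1
    apply ContinuousAt.continuousWithinAt
    apply ContinuousAt.sub
    · exact continuousAt_const.sub (continuousAt_const.mul (Real.continuousAt_log hx0.ne'))
    · exact continuousAt_const.mul (Real.continuousAt_rpow_const x α (Or.inl hx0.ne'))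
  have hivt := intermediate_value_Icc' hab hcont
  have h0mem : (0:ℝ) ∈ Set.Icc (g b) (g a) := ⟨le_of_lt hgb, le_of_lt hga⟩
  obtain ⟨t₀, ht₀mem, hgt₀⟩ := hivt h0mem
  have ht₀0 : 0 < t₀ := lt_of_lt_of_le ha0 ht₀mem.1
  have hderiv0 : deriv f t₀ = 0 := by
    rw [(hderiv t₀ ht₀0).deriv, hgt₀, mul_zero]
  have huniq : ∀ t : ℝ, 0 < t → deriv f t = 0 → t = t₀ := by
    intro t ht hdt
    rw [(hderiv t ht).deriv] at hdt
    have hgt : g t = 0 := by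
      rcases mul_eq_zero.mp hdt with h | h
      · exact absurd h (pow_ne_zero 3 ht.ne')
      · exact h
    exact hanti.injOn ht ht₀0 (hgt.trans hgt₀.symm)
  have hmax : ∀ t : ℝ, 0 < t → f t ≤ f t₀ := by
    intro t ht
    rcases lt_trichotomy t t₀ with hlt | heq | hgt
    · have hmono : StrictMonoOn f (Set.Icc t t₀) := by
        apply strictMonoOn_of_deriv_pos (convex_Icc t t₀)
        · intro x hx
          have hx0 : 0 < x := lt_of_lt_of_le ht hx.1
          exact (hderiv x hx0).continuousAt.continuousWithinAt
        · intro x hx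
          rw [interior_Icc] at hx
          have hx0 : 0 < x := lt_trans ht hx.1
          rw [(hderiv x hx0).deriv]
          have : 0 < g x := by
            have := hanti (Set.mem_Ioi.mpr hx0) (Set.mem_Ioi.mpr ht₀0) hx.2
            rw [hgt₀] at this; exact this
          positivity
      exact le_of_lt (hmono ⟨le_refl t, le_of_lt hlt⟩ ⟨le_of_lt hlt, le_refl t₀⟩ hlt)
    · rw [heq]
    · have hmono : StrictAntiOn f (Set.Icc t₀ t) := by
        apply strictAntiOn_of_deriv_neg (convex_Icc t₀ t)
        · intro x hx
          have hx0 : 0 < x := lt_of_lt_of_le ht₀0 hx.1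
          exact (hderiv x hx0).continuousAt.continuousWithinAt
        · intro x hx
          rw [interior_Icc] at hx
          have hx0 : 0 < x := lt_trans ht₀0 hx.1
          rw [(hderiv x hx0).deriv]
          have hneg : g x < 0 := by
            have := hanti (Set.mem_Ioi.mpr ht₀0) (Set.mem_Ioi.mpr (lt_trans ht₀0 hx.1)) hx.1
            rw [hgt₀] at this; exact this
          have : 0 < x ^ 3 := by positivity
          nlinarith
      exact le_of_lt (hmono ⟨le_refl t₀, le_of_lt hgt⟩ ⟨le_of_lt hgt, le_refl t⟩ hgt)
  -- positivity: find small u with f u > 0, then f t₀ ≥ f u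
  have hpos : 0 < f t₀ := by
    set s₂ : ℝ := max 0 ((D / (2 * p) - A / 2 - C / 4 + 1) * 4 / B) with hs₂
    set u : ℝ := Real.exp (-s₂) with hu
    have hu0 : 0 < u := Real.exp_pos _
    have hs₂0 : 0 ≤ s₂ := le_max_left _ _
    have hu1 : u ≤ 1 := Real.exp_le_one_iff.mpr (by linarith)
    have hlogu : Real.log (1 / u) = s₂ := by
      rw [one_div, Real.log_inv, Real.log_exp, neg_neg]
    have hsplit : u ^ (4 * p - 2) = u ^ 4 * u ^ α := by
      rw [show 4 * p - 2 = (4:ℝ) + α by simp only [hα]; ring,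
        Real.rpow_add hu0, show (4:ℝ) = ((4:ℕ):ℝ) by norm_num, Real.rpow_natCast]
    have huα0 : 0 ≤ u ^ α := Real.rpow_nonneg (le_of_lt hu0) α
    have huα1 : u ^ α ≤ 1 := Real.rpow_le_one (le_of_lt hu0) hu1 (le_of_lt hα0)
    have hBs : (D / (2 * p) - A / 2 - C / 4 + 1) * 4 ≤ B * s₂ := by
      have h1 : (D / (2 * p) - A / 2 - C / 4 + 1) * 4 / B ≤ s₂ := le_max_right _ _
      calc (D / (2 * p) - A / 2 - C / 4 + 1) * 4
          = (D / (2 * p) - A / 2 - C / 4 + 1) * 4 / B * B := by field_simp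
        _ ≤ s₂ * B := mul_le_mul_of_nonneg_right h1 (le_of_lt hB)
        _ = B * s₂ := mul_comm _ _
    have hDp : 0 < D / (2 * p) := div_pos hD (by linarith)
    have hfu : 0 < f u := by
      rw [hf u, hlogu, hsplit]
      have hu4 : 0 < u ^ 4 := by positivity
      have hinner : 1 ≤ A / 2 + B / 4 * s₂ + C / 4 - D / (2 * p) := by linarith
      have h1 : D / (2 * p) * (u ^ 4 * u ^ α) ≤ D / (2 * p) * u ^ 4 := by
        apply mul_le_mul_of_nonneg_left _ (le_of_lt hDp)
        nlinarith
      have h2 : u ^ 4 * 1 ≤ u ^ 4 * (A / 2 + B / 4 * s₂ + C / 4 - D / (2 * p)) :=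
        mul_le_mul_of_nonneg_left hinner (le_of_lt hu4)
      nlinarith [h1, h2, hu4]
    exact lt_of_lt_of_le hfu (hmax u hu0)
  exact ⟨t₀, ht₀0, hderiv0, huniq, hmax, hpos⟩
end

section
/- Let p ≥ 2 be a real number, and let A, B, C, D be real numbers with A ≥ 0, B ≥ 0, C ∈ ℝ, D ≥ 0 satisfying the constraint 2A − B/4 + C − ((4p − 2)/(2p)) D = 0. Define f : (0,∞) → ℝ by f(t) = (A/2) t⁴ + (B/4) t⁴ log(1/t) + (C/4) t⁴ − (D/(2p)) t^{4p−2}. Then for every t > 0, f(t) ≤ f(1) − ((1 − t⁴ + 4 t⁴ log t)/16) B. -/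
open Real

/-- For `p ≥ 2`, `A ≥ 0`, `B ≥ 0`, `C ∈ ℝ`, `D ≥ 0` satisfying the
Nehari–Pohozaev constraint `2A − B/4 + C − ((4p − 2)/(2p))D = 0`, the fiber map
`f(t) = (A/2)t⁴ + (B/4)t⁴ log(1/t) + (C/4)t⁴ − (D/(2p)) t^{4p−2}` satisfies
`f(t) ≤ f(1) − ((1 − t⁴ + 4t⁴ log t)/16) B` for all `t > 0`. -/
theorem fiber_energy_comparison (p : ℝ) (hp : 2 ≤ p)
    (A B C D : ℝ) (hA : 0 ≤ A) (hB : 0 ≤ B) (hD : 0 ≤ D)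
    (hconstraint : 2 * A - B / 4 + C - (4 * p - 2) / (2 * p) * D = 0)
    (f : ℝ → ℝ)
    (hf : ∀ t : ℝ, f t = A / 2 * t ^ 4 + B / 4 * t ^ 4 * Real.log (1 / t)
      + C / 4 * t ^ 4 - D / (2 * p) * t ^ (4 * p - 2)) :
    ∀ t : ℝ, 0 < t → f t ≤ f 1 - (1 - t ^ 4 + 4 * t ^ 4 * Real.log t) / 16 * B := by
  intro t ht
  have hp0 : (0:ℝ) < p := by linarith
  have hS : (0:ℝ) < t ^ 4 := by positivity
  have key : 1 + (p - 1/2) * (t ^ 4 - 1) ≤ (t ^ 4) ^ (p - 1/2) := by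
    have h := one_add_mul_self_le_rpow_one_add
      (s := t ^ 4 - 1) (by linarith) (p := p - 1/2) (by linarith)
    simpa using h
  have heq : t ^ (4 * p - 2) = (t ^ 4) ^ (p - 1/2) := by
    rw [show (4 * p - 2 : ℝ) = (4:ℝ) * (p - 1/2) by ring, Real.rpow_mul ht.le]
    rw [show ((4:ℝ)) = ((4:ℕ):ℝ) by norm_num, Real.rpow_natCast]
  have h2 : D / (2 * p) * (1 + (p - 1/2) * (t ^ 4 - 1))
      ≤ D / (2 * p) * (t ^ 4) ^ (p - 1/2) :=
    mul_le_mul_of_nonneg_left key (by positivity)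
  have main : A / 2 * t ^ 4 + B / 4 * t ^ 4 * (-Real.log t) + C / 4 * t ^ 4
      - D / (2 * p) * (1 + (p - 1/2) * (t ^ 4 - 1))
      = A / 2 + C / 4 - D / (2 * p)
        - (1 - t ^ 4 + 4 * t ^ 4 * Real.log t) / 16 * B := by
    linear_combination ((t ^ 4 - 1) / 4) * hconstraint
  rw [hf t, hf 1, heq, Real.one_rpow]
  simp only [one_div, Real.log_inv, inv_one, Real.log_one, neg_zero, mul_zero, add_zero,
    one_pow, mul_one]
  linarith [h2, main]
end
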